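/- Let 𝔮 be a Lie algebra over ℝ carrying a topology making it a topological vector space such that the Lie bracket ⁅·,·⁆ : 𝔮 × 𝔮 → 𝔮 is continuous, and let S ⊆ 𝔮 be a subset. With SP₁(S) := span_ℝ(S), SP_{n+1}(S) := span_ℝ{ ⁅x,y⁆ : x ∈ SP₁(S), y ∈ SP_n(S) }, and C̄SP_n(S) the topological closure of SP_n(S), one has, for all m, n ≥ 1: span_ℝ{ ⁅x,y⁆ : x ∈ C̄SP_m(S), y ∈ C̄SP_n(S) } ⊆ C̄SP_{m+n}(S). -/

import Mathlib

/-- `SP K S n` is the submodule `SP_{n+1}(S)` of the paper: `SP K S 0 = span K S`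
and `SP K S (n+1) = span K { ⁅x,y⁆ | x ∈ span K S, y ∈ SP K S n }`. -/
def SP (K : Type*) {L : Type*} [Field K] [LieRing L] [LieAlgebra K L]
    (S : Set L) : ℕ → Submodule K L
  | 0 => Submodule.span K S
  | n + 1 =>
      Submodule.span K
        {z : L | ∃ x ∈ Submodule.span K S, ∃ y ∈ SP K S n, z = ⁅x, y⁆}

section

variable {K L : Type*} [Field K] [LieRing L] [LieAlgebra K L] (S : Set L)

lemma lie_mem_SP_succ {x y : L} {n : ℕ} (hx : x ∈ Submodule.span K S) (hy : y ∈ SP K S n) :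
    ⁅x, y⁆ ∈ SP K S (n + 1) :=
  Submodule.subset_span ⟨x, hx, y, hy, rfl⟩

lemma lie_mem_SP (m : ℕ) :
    ∀ n : ℕ, ∀ x ∈ SP K S m, ∀ y ∈ SP K S n, ⁅x, y⁆ ∈ SP K S (m + n + 1) := by
  induction m with
  | zero =>
    intro n x hx y hy
    rw [Nat.zero_add]
    exact lie_mem_SP_succ S hx hy
  | succ m ih =>
    intro n x hx y hy
    rw [show m + 1 + n + 1 = m + n + 1 + 1 by omega]
    induction hx using Submodule.span_induction with
    | mem z hz =>
      obtain ⟨a, ha, b, hb, rfl⟩ := hz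
      -- Jacobi: `⁅⁅a, b⁆, y⁆ = ⁅a, ⁅b, y⁆⁆ - ⁅b, ⁅a, y⁆⁆`, with `b ∈ SP m` and `⁅a, y⁆ ∈ SP (n + 1)`.
      rw [lie_lie]
      refine sub_mem (lie_mem_SP_succ S ha (ih n b hb y hy)) ?_
      simpa only [show m + (n + 1) + 1 = m + n + 1 + 1 by omega]
        using ih (n + 1) b hb _ (lie_mem_SP_succ S ha hy)
    | zero => simp only [zero_lie, zero_mem]
    | add u v _ _ hu hv => simpa only [add_lie] using add_mem hu hv
    | smul c u _ hu => simpa only [smul_lie] using Submodule.smul_mem _ c hu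

end

/-- For a real topological Lie algebra with continuous bracket and all `m, n ≥ 1`
(encoded by the index shift `SP ℝ S m = SP_{m+1}(S)`),
`span_ℝ { ⁅x,y⁆ | x ∈ closure (SP_m(S)), y ∈ closure (SP_n(S)) } ⊆ closure (SP_{m+n}(S))`. -/
theorem span_bracket_closure_SP_le (L : Type*) [LieRing L] [LieAlgebra ℝ L]
    [TopologicalSpace L] [IsTopologicalAddGroup L] [ContinuousSMul ℝ L]
    (hbr : Continuous fun p : L × L => ⁅p.1, p.2⁆)
    (S : Set L) (m n : ℕ) :
    Submodule.span ℝ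
        {z : L | ∃ x ∈ closure (SP ℝ S m : Set L),
            ∃ y ∈ closure (SP ℝ S n : Set L), z = ⁅x, y⁆}
      ≤ (SP ℝ S (m + n + 1)).topologicalClosure := by
  rw [Submodule.span_le]
  rintro _ ⟨x, hx, y, hy, rfl⟩
  exact map_mem_closure₂ hbr hx hy (lie_mem_SP S m n)
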